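/- The reduction relation →βΣ, the union of β-reduction with the rewrite rule [α:type, β:type] term(arrow α β) ⇝ term α → term β of the HOL signature Σ in the λΠ-calculus modulo rewriting, is confluent. -/

import Mathlib

set_option autoImplicit false

namespace HolDk

/-! ### Dedukti: the λΠ-calculus modulo rewriting, with de Bruijn indices.

Terms `M, N, A, B ::= x | c | Type | Kind | Πx:A.B | λx:A.M | M N`. -/

inductive DTm : Type
  | var   : ℕ → DTm
  | const : ℕ → DTm
  | type  : DTm
  | kind  : DTm
  | pi    : DTm → DTm → DTm
  | lam   : DTm → DTm → DTm
  | app   : DTm → DTm → DTm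
  deriving DecidableEq

namespace DTm

/-- Shift the free de Bruijn indices `≥ c` up by `d`. -/
def shift (d : ℕ) : ℕ → DTm → DTm
  | c, var n => if n < c then var n else var (n + d)
  | _, const k => const k
  | _, type => type
  | _, kind => kind
  | c, pi A B => pi (shift d c A) (shift d (c+1) B)
  | c, lam A M => lam (shift d c A) (shift d (c+1) M)
  | c, app M N => app (shift d c M) (shift d c N)

/-- Lift a simultaneous substitution under one binder. -/
def liftSub (σ : ℕ → DTm) : ℕ → DTm
  | 0 => var 0
  | n+1 => shift 1 0 (σ n)

/-- Simultaneous substitution. -/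
def subst (σ : ℕ → DTm) : DTm → DTm
  | var n => σ n
  | const k => const k
  | type => type
  | kind => kind
  | pi A B => pi (subst σ A) (subst (liftSub σ) B)
  | lam A M => lam (subst σ A) (subst (liftSub σ) M)
  | app M N => app (subst σ M) (subst σ N)

/-- Substitution `[N/x]M` of `N` for the de Bruijn index `0` in `M`. -/
def subst0 (M N : DTm) : DTm :=
  subst (fun n => match n with | 0 => N | n+1 => var n) M

/-- Non-dependent product `A → B`. -/
def arr (A B : DTm) : DTm := pi A (shift 1 0 B)

end DTm

/-- Signatures `Σ ::= · | Σ, c : A | Σ, [Γ] M ⇝ N`. -/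
inductive Sig : Type
  | empty : Sig
  | pushConst : Sig → ℕ → DTm → Sig
  | pushRule : Sig → List DTm → DTm → DTm → Sig

/-- Lookup of the type of a constant in a signature. -/
def Sig.constType : Sig → ℕ → Option DTm
  | .empty, _ => none
  | .pushConst S c A, d => if d = c then some A else S.constType d
  | .pushRule S _ _ _, d => S.constType d

/-- Membership of a rewrite rule `[Γ] M ⇝ N` in a signature. -/
def Sig.hasRule : Sig → List DTm → DTm → DTm → Prop
  | .empty, _, _, _ => False
  | .pushConst S _ _, G, M, N => S.hasRule G M N
  | .pushRule S G' M' N', G, M, N => (G = G' ∧ M = M' ∧ N = N') ∨ S.hasRule G M N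

/-- Pure β-reduction (one step, contextual closure). -/
inductive RedBeta : DTm → DTm → Prop
  | beta (A M N) : RedBeta (.app (.lam A M) N) (M.subst0 N)
  | appL {M M'} (N) : RedBeta M M' → RedBeta (.app M N) (.app M' N)
  | appR (M) {N N'} : RedBeta N N' → RedBeta (.app M N) (.app M N')
  | lamTy {A A'} (M) : RedBeta A A' → RedBeta (.lam A M) (.lam A' M)
  | lamBody (A) {M M'} : RedBeta M M' → RedBeta (.lam A M) (.lam A M')
  | piL {A A'} (B) : RedBeta A A' → RedBeta (.pi A B) (.pi A' B)
  | piR (A) {B B'} : RedBeta B B' → RedBeta (.pi A B) (.pi A B')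

/-- The reduction relation `→βΣ`: β-reduction together with the rewrite rules of
the signature (one step, contextual closure). -/
inductive Red (S : Sig) : DTm → DTm → Prop
  | beta (A M N) : Red S (.app (.lam A M) N) (M.subst0 N)
  | rew {G L R} (σ : ℕ → DTm) : S.hasRule G L R → Red S (L.subst σ) (R.subst σ)
  | appL {M M'} (N) : Red S M M' → Red S (.app M N) (.app M' N)
  | appR (M) {N N'} : Red S N N' → Red S (.app M N) (.app M N')
  | lamTy {A A'} (M) : Red S A A' → Red S (.lam A M) (.lam A' M)
  | lamBody (A) {M M'} : Red S M M' → Red S (.lam A M) (.lam A M')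
  | piL {A A'} (B) : Red S A A' → Red S (.pi A B) (.pi A' B)
  | piR (A) {B B'} : Red S B B' → Red S (.pi A B) (.pi A B')

/-- The conversion `≡βΣ`: reflexive symmetric transitive closure of `→βΣ`. -/
def Conv (S : Sig) : DTm → DTm → Prop := Relation.EqvGen (Red S)

mutual
/-- Signature formation `Σ signature`. -/
inductive SigWf : Sig → Prop
  | empty : SigWf .empty
  | pushConst {S : Sig} {c : ℕ} {A s : DTm} : SigWf S → Typed S [] A s →
      (s = DTm.type ∨ s = DTm.kind) → S.constType c = none →
      SigWf (S.pushConst c A)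
  | pushRule {S : Sig} {G : List DTm} {M N A : DTm} : SigWf S →
      Typed S G M A → Typed S G N A → SigWf (S.pushRule G M N)

/-- Context formation `Σ | Γ context` (contexts are lists, head = most recent binding). -/
inductive CtxWf : Sig → List DTm → Prop
  | nil {S : Sig} : SigWf S → CtxWf S []
  | cons {S : Sig} {G : List DTm} {A : DTm} : CtxWf S G → Typed S G A DTm.type →
      CtxWf S (A :: G)

/-- The typing judgment `Σ | Γ ⊢ M : A` of the λΠ-calculus modulo rewriting. -/
inductive Typed : Sig → List DTm → DTm → DTm → Prop
  | var {S : Sig} {G : List DTm} {n : ℕ} {A : DTm} : CtxWf S G → G[n]? = some A →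
      Typed S G (.var n) (A.shift (n+1) 0)
  | const {S : Sig} {G : List DTm} {c : ℕ} {A : DTm} : CtxWf S G →
      S.constType c = some A → Typed S G (.const c) A
  | type {S : Sig} {G : List DTm} : CtxWf S G → Typed S G .type .kind
  | prod {S : Sig} {G : List DTm} {A B s : DTm} : Typed S G A .type →
      Typed S (A :: G) B s → (s = DTm.type ∨ s = DTm.kind) → Typed S G (.pi A B) s
  | abs {S : Sig} {G : List DTm} {A M B : DTm} : Typed S G A .type →
      Typed S (A :: G) M B → Typed S G (.lam A M) (.pi A B)
  | app {S : Sig} {G : List DTm} {M N A B : DTm} : Typed S G M (.pi A B) →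
      Typed S G N A → Typed S G (.app M N) (B.subst0 N)
  | conv {S : Sig} {G : List DTm} {M A B : DTm} : Typed S G M A →
      Typed S G B DTm.type → Conv S A B → Typed S G M B
end

/-! ### HOL -/

/-- HOL types: type variables, `bool`, `ind`, and arrow types. -/
inductive HTy : Type
  | tvar : ℕ → HTy
  | bool : HTy
  | ind  : HTy
  | arr  : HTy → HTy → HTy
  deriving DecidableEq

/-- HOL terms (simply typed λ-terms, de Bruijn indices for term variables),
with the polymorphic constants `(=_A)` and `select_A`. -/
inductive HTm : Type
  | var    : ℕ → HTm
  | lam    : HTy → HTm → HTm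
  | app    : HTm → HTm → HTm
  | eq     : HTy → HTm
  | select : HTy → HTm
  deriving DecidableEq

/-- The HOL proposition `M = N` (at type `A`), i.e. `(=_A) M N`. -/
def HTm.heq (A : HTy) (M N : HTm) : HTm := .app (.app (.eq A) M) N

/-- HOL typing: `Δ ⊢ M : A` where `Δ` types the term variables. -/
inductive HTyped : List HTy → HTm → HTy → Prop
  | var {D : List HTy} {n : ℕ} {A : HTy} : D[n]? = some A → HTyped D (.var n) A
  | lam {D : List HTy} {A B : HTy} {M : HTm} : HTyped (A :: D) M B →
      HTyped D (.lam A M) (A.arr B)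
  | app {D : List HTy} {A B : HTy} {M N : HTm} : HTyped D M (A.arr B) →
      HTyped D N A → HTyped D (.app M N) B
  | eq {D : List HTy} {A : HTy} : HTyped D (.eq A) (A.arr (A.arr .bool))
  | select {D : List HTy} {A : HTy} : HTyped D (.select A) ((A.arr .bool).arr A)

namespace HTm

/-- Shift the free term-variable indices `≥ c` up by `d`. -/
def shift (d : ℕ) : ℕ → HTm → HTm
  | c, var n => if n < c then var n else var (n + d)
  | c, lam A M => lam A (shift d (c+1) M)
  | c, app M N => app (shift d c M) (shift d c N)
  | _, eq A => eq A
  | _, select A => select A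

def liftSub (σ : ℕ → HTm) : ℕ → HTm
  | 0 => var 0
  | n+1 => shift 1 0 (σ n)

/-- Simultaneous capture-avoiding substitution of term variables. -/
def substF (σ : ℕ → HTm) : HTm → HTm
  | var n => σ n
  | lam A M => lam A (substF (liftSub σ) M)
  | app M N => app (substF σ M) (substF σ N)
  | eq A => eq A
  | select A => select A

/-- Substitution `[N/x]M` for the de Bruijn index `0`. -/
def subst0 (M N : HTm) : HTm :=
  substF (fun n => match n with | 0 => N | n+1 => var n) M

/-- Simultaneous (parallel) substitution `M[M₁/x₁, …, Mₙ/xₙ]` given by a list. -/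
def substL (σ : List HTm) (M : HTm) : HTm :=
  substF (fun n => (σ[n]?).getD (var n)) M

end HTm

/-- Type substitution `A[A₁/α₁, …, Aₘ/αₘ]` on HOL types. -/
def HTy.tsub (θ : List HTy) : HTy → HTy
  | .tvar n => (θ[n]?).getD (.tvar n)
  | .bool => .bool
  | .ind => .ind
  | .arr A B => .arr (A.tsub θ) (B.tsub θ)

/-- Type substitution on HOL terms. -/
def HTm.tsub (θ : List HTy) : HTm → HTm
  | .var n => .var n
  | .lam A M => .lam (A.tsub θ) (M.tsub θ)
  | .app M N => .app (M.tsub θ) (N.tsub θ)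
  | .eq A => .eq (A.tsub θ)
  | .select A => .select (A.tsub θ)

/-- All free type variables of a HOL type are `< n`. -/
def HTy.tvLt (n : ℕ) : HTy → Prop
  | .tvar j => j < n
  | .bool => True
  | .ind => True
  | .arr A B => A.tvLt n ∧ B.tvLt n

/-- All free type variables of a HOL term are `< n`. -/
def HTm.tvLt (n : ℕ) : HTm → Prop
  | .var _ => True
  | .lam A M => A.tvLt n ∧ M.tvLt n
  | .app M N => M.tvLt n ∧ N.tvLt n
  | .eq A => A.tvLt n
  | .select A => A.tvLt n

/-- One-step β-reduction of HOL terms (contextual closure). -/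
inductive HBeta : HTm → HTm → Prop
  | beta (A : HTy) (M N : HTm) : HBeta (.app (.lam A M) N) (M.subst0 N)
  | appL {M M'} (N) : HBeta M M' → HBeta (.app M N) (.app M' N)
  | appR (M) {N N'} : HBeta N N' → HBeta (.app M N) (.app M N')
  | lamBody (A) {M M'} : HBeta M M' → HBeta (.lam A M) (.lam A M')

/-- HOL derivations `Γ ⊢ φ` (Fig. 2), in an ambient term-variable context `Δ`,
with hypotheses `Γ` a finite set of propositions.  The `Subst` rule is split
into a type-substitution rule and a term-substitution rule. -/
inductive HDeriv : List HTy → Finset HTm → HTm → Type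
  | refl {D : List HTy} (A : HTy) (M : HTm) :
      HTyped D M A → HDeriv D ∅ (HTm.heq A M M)
  | absThm {D : List HTy} {G : Finset HTm} (A B : HTy) (M N : HTm) :
      HDeriv (A :: D) (G.image (HTm.shift 1 0)) (HTm.heq B M N) →
      HDeriv D G (HTm.heq (A.arr B) (.lam A M) (.lam A N))
  | appThm {D : List HTy} {G G' : Finset HTm} (A B : HTy) (F Gt M N : HTm) :
      HDeriv D G (HTm.heq (A.arr B) F Gt) → HDeriv D G' (HTm.heq A M N) →
      HDeriv D (G ∪ G') (HTm.heq B (F.app M) (Gt.app N))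
  | beta {D : List HTy} (A B : HTy) (M : HTm) :
      HTyped (A :: D) M B →
      HDeriv (A :: D) ∅ (HTm.heq B (.app (.lam A (M.shift 1 1)) (.var 0)) M)
  | assume {D : List HTy} (φ : HTm) : HTyped D φ .bool → HDeriv D {φ} φ
  | eqMp {D : List HTy} {G G' : Finset HTm} (φ ψ : HTm) :
      HDeriv D G (HTm.heq .bool φ ψ) → HDeriv D G' φ →
      HDeriv D (G ∪ G') ψ
  | deductAntiSym {D : List HTy} {G G' : Finset HTm} (φ ψ : HTm) :
      HDeriv D G φ → HDeriv D G' ψ →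
      HDeriv D (G.erase ψ ∪ G'.erase φ) (HTm.heq .bool φ ψ)
  | typeSubst {D : List HTy} {G : Finset HTm} {φ : HTm} (θ : List HTy) :
      HDeriv D G φ →
      HDeriv (D.map (HTy.tsub θ)) (G.image (HTm.tsub θ)) (φ.tsub θ)
  | termSubst {D : List HTy} {G : Finset HTm} {φ : HTm} {D' : List HTy} (σ : List HTm) :
      σ.length = D.length →
      (∀ (i : ℕ) (A : HTy), D[i]? = some A → ∃ t, σ[i]? = some t ∧ HTyped D' t A) →
      HDeriv D G φ →
      HDeriv D' (G.image (HTm.substL σ)) (HTm.substL σ φ)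

/-! ### The Dedukti signature Σ for HOL -/

def cTy : DTm := .const 0
def dBool : DTm := .const 1
def dInd : DTm := .const 2
def tArr (a b : DTm) : DTm := .app (.app (.const 3) a) b
def tTerm (a : DTm) : DTm := .app (.const 4) a
def tEq (a x y : DTm) : DTm := .app (.app (.app (.const 5) a) x) y
def tProof (p : DTm) : DTm := .app (.const 7) p
def dRefl : DTm := .const 8
def dFunExt : DTm := .const 9
def dAppThm : DTm := .const 10
def dPropExt : DTm := .const 11
def dEqMp : DTm := .const 12
def dImp : DTm := .const 13
def dForall : DTm := .const 14

def tyArrow : DTm := DTm.arr cTy (DTm.arr cTy cTy)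
def tyTerm : DTm := DTm.arr cTy .type
def tyEq : DTm := .pi cTy (tTerm (tArr (.var 0) (tArr (.var 0) dBool)))
def tySelect : DTm := .pi cTy (tTerm (tArr (tArr (.var 0) dBool) (.var 0)))
def tyProof : DTm := DTm.arr (tTerm dBool) .type
def tyRefl : DTm :=
  .pi cTy (.pi (tTerm (.var 0)) (tProof (tEq (.var 1) (.var 0) (.var 0))))
def tyFunExt : DTm :=
  .pi cTy (.pi cTy (.pi (tTerm (tArr (.var 1) (.var 0))) (.pi (tTerm (tArr (.var 2) (.var 1)))
    (DTm.arr
      (.pi (tTerm (.var 3))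
        (tProof (tEq (.var 3) (.app (.var 2) (.var 0)) (.app (.var 1) (.var 0)))))
      (tProof (tEq (tArr (.var 3) (.var 2)) (.var 1) (.var 0)))))))
def tyAppThm : DTm :=
  .pi cTy (.pi cTy (.pi (tTerm (tArr (.var 1) (.var 0))) (.pi (tTerm (tArr (.var 2) (.var 1)))
    (.pi (tTerm (.var 3)) (.pi (tTerm (.var 4))
      (DTm.arr (tProof (tEq (tArr (.var 5) (.var 4)) (.var 3) (.var 2)))
        (DTm.arr (tProof (tEq (.var 5) (.var 1) (.var 0)))
          (tProof (tEq (.var 4) (.app (.var 3) (.var 1)) (.app (.var 2) (.var 0)))))))))))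
def tyPropExt : DTm :=
  .pi (tTerm dBool) (.pi (tTerm dBool)
    (DTm.arr (DTm.arr (tProof (.var 0)) (tProof (.var 1)))
      (DTm.arr (DTm.arr (tProof (.var 0)) (tProof (.var 1)))
        (tProof (tEq dBool (.var 1) (.var 0))))))
def tyEqMp : DTm :=
  .pi (tTerm dBool) (.pi (tTerm dBool)
    (DTm.arr (tProof (tEq dBool (.var 1) (.var 0)))
      (DTm.arr (tProof (.var 1)) (tProof (.var 0)))))

/-- The rewrite rule `[α : type, β : type] term (arrow α β) ⇝ term α → term β`
(in the context list, the head is the most recent variable `β`). -/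
def arrowRuleCtx : List DTm := [cTy, cTy]
def arrowRuleL : DTm := tTerm (tArr (.var 1) (.var 0))
def arrowRuleR : DTm := DTm.arr (tTerm (.var 1)) (tTerm (.var 0))

def baseSig : Sig :=
  ((((Sig.empty.pushConst 0 .type).pushConst 1 cTy).pushConst 2 cTy).pushConst 3
    tyArrow).pushConst 4 tyTerm

/-- The HOL signature Σ:
`type : Type`, `bool ind : type`, `arrow : type → type → type`, `term : type → Type`,
`eq`, `select`, the rewrite rule `term (arrow α β) ⇝ term α → term β`,
`proof : term bool → Type`, and `Refl`, `FunExt`, `AppThm`, `PropExt`, `EqMp`. -/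
def holSig : Sig :=
  ((((((((baseSig.pushConst 5 tyEq).pushConst 6 tySelect).pushRule arrowRuleCtx
    arrowRuleL arrowRuleR).pushConst 7 tyProof).pushConst 8 tyRefl).pushConst 9
    tyFunExt).pushConst 10 tyAppThm).pushConst 11 tyPropExt).pushConst 12 tyEqMp

/-! ### The translation -/

/-- Translation `|A|` of a HOL type as a Dedukti term; `ρ` gives the Dedukti
de Bruijn index of each HOL type variable. -/
def transTy (ρ : ℕ → ℕ) : HTy → DTm
  | .tvar j => .var (ρ j)
  | .bool => dBool
  | .ind => dInd
  | .arr A B => tArr (transTy ρ A) (transTy ρ B)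

/-- Lift a variable renaming under one binder. -/
def liftVar (ρ : ℕ → ℕ) : ℕ → ℕ
  | 0 => 0
  | n+1 => ρ n + 1

/-- Translation `|M|` of a HOL term as a Dedukti term; `ρT`, `ρt` give the
Dedukti de Bruijn indices of the free HOL type resp. term variables. -/
def transTm (ρT ρt : ℕ → ℕ) : HTm → DTm
  | .var i => .var (ρt i)
  | .lam A M => .lam (tTerm (transTy ρT A)) (transTm (fun j => ρT j + 1) (liftVar ρt) M)
  | .app M N => .app (transTm ρT ρt M) (transTm ρT ρt N)
  | .eq A => .app (.const 5) (transTy ρT A)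
  | .select A => .app (.const 6) (transTy ρT A)

/-- The Dedukti context `x₁ : ‖A₁‖, …, xₖ : ‖Aₖ‖` translating a HOL
term-variable context (to be placed in front of the `n` type variables). -/
def dTermCtx : List HTy → List DTm
  | [] => []
  | A :: D => tTerm (transTy (fun j => D.length + j) A) :: dTermCtx D

/-- The Dedukti context `‖Γ‖ = h₁ : ‖φ₁‖, …` translating HOL hypotheses;
`k` is the number of HOL term variables in scope. -/
def hypCtx (k : ℕ) : List HTm → List DTm
  | [] => []
  | φ :: rest =>
      tProof (transTm (fun j => rest.length + k + j) (fun i => rest.length + i) φ) ::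
        hypCtx k rest

def mkApps (f : DTm) (args : List DTm) : DTm := args.foldl .app f

def mkTyLams : ℕ → DTm → DTm
  | 0, M => M
  | n+1, M => .lam cTy (mkTyLams n M)

/-- `λx₁ : ‖B₁‖. … λxₖ : ‖Bₖ‖. M` (the head of the list is the innermost binder). -/
def bindTerms (ρT : ℕ → ℕ) : List HTy → DTm → DTm
  | [], M => M
  | A :: D, M => bindTerms ρT D (.lam (tTerm (transTy (fun j => ρT j + D.length) A)) M)

/-- Translation `|𝒟|` of a HOL derivation as a Dedukti proof term; `ρT`, `ρt`
give the Dedukti indices of free HOL type/term variables, and `ρh` gives the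
index of the hypothesis variable `h_φ` for each hypothesis `φ`. -/
def transDeriv : {D : List HTy} → {G : Finset HTm} → {φ : HTm} →
    (ρT ρt : ℕ → ℕ) → (ρh : HTm → ℕ) → HDeriv D G φ → DTm
  | _, _, _, ρT, ρt, _, .refl A M _ =>
      .app (.app dRefl (transTy ρT A)) (transTm ρT ρt M)
  | _, _, _, ρT, ρt, ρh, .absThm A B M N d =>
      .app (.app (.app (.app (.app dFunExt (transTy ρT A)) (transTy ρT B))
          (transTm ρT ρt (.lam A M))) (transTm ρT ρt (.lam A N)))
        (.lam (tTerm (transTy ρT A))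
          (transDeriv (fun j => ρT j + 1) (liftVar ρt)
            (fun χ => ρh (HTm.substF (fun i => .var (i - 1)) χ) + 1) d))
  | _, _, _, ρT, ρt, ρh, .appThm A B F Gt M N d1 d2 =>
      mkApps dAppThm [transTy ρT A, transTy ρT B, transTm ρT ρt F, transTm ρT ρt Gt,
        transTm ρT ρt M, transTm ρT ρt N,
        transDeriv ρT ρt ρh d1, transDeriv ρT ρt ρh d2]
  | _, _, _, ρT, ρt, _, .beta _ B M _ =>
      .app (.app dRefl (transTy ρT B)) (transTm ρT ρt M)
  | _, _, _, _, _, ρh, .assume φ _ => .var (ρh φ)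
  | _, _, _, ρT, ρt, ρh, .eqMp φ ψ d1 d2 =>
      mkApps dEqMp [transTm ρT ρt φ, transTm ρT ρt ψ,
        transDeriv ρT ρt ρh d1, transDeriv ρT ρt ρh d2]
  | _, _, _, ρT, ρt, ρh, .deductAntiSym φ ψ d1 d2 =>
      mkApps dPropExt [transTm ρT ρt φ, transTm ρT ρt ψ,
        .lam (tProof (transTm ρT ρt ψ))
          (transDeriv (fun j => ρT j + 1) (fun i => ρt i + 1)
            (fun χ => if χ = ψ then 0 else ρh χ + 1) d1),
        .lam (tProof (transTm ρT ρt φ))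
          (transDeriv (fun j => ρT j + 1) (fun i => ρt i + 1)
            (fun χ => if χ = φ then 0 else ρh χ + 1) d2)]
  | _, _, _, ρT, ρt, ρh, .typeSubst θ d =>
      mkApps
        (mkTyLams θ.length
          (transDeriv (fun j => if j < θ.length then j else ρT j + θ.length)
            (fun i => ρt i + θ.length)
            (fun χ => ρh (HTm.tsub θ χ) + θ.length) d))
        (θ.reverse.map (transTy ρT))
  | _, _, _, ρT, ρt, ρh, @HDeriv.termSubst D₀ _ _ _ σ _ _ d =>
      mkApps
        (bindTerms ρT D₀
          (transDeriv (fun j => ρT j + D₀.length)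
            (fun i => if i < D₀.length then i else ρt (i - D₀.length) + D₀.length)
            (fun χ => ρh (HTm.substL σ χ) + D₀.length) d))
        (σ.reverse.map (transTm ρT ρt))

/-- All free type variables appearing in a HOL derivation are `< n`. -/
def HDeriv.tvLt (n : ℕ) : {D : List HTy} → {G : Finset HTm} → {φ : HTm} →
    HDeriv D G φ → Prop
  | _, _, _, .refl A M _ => A.tvLt n ∧ M.tvLt n
  | _, _, _, .absThm A B M N d =>
      A.tvLt n ∧ B.tvLt n ∧ M.tvLt n ∧ N.tvLt n ∧ HDeriv.tvLt n d
  | _, _, _, .appThm A B F Gt M N d1 d2 =>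
      A.tvLt n ∧ B.tvLt n ∧ F.tvLt n ∧ Gt.tvLt n ∧ M.tvLt n ∧ N.tvLt n ∧
        HDeriv.tvLt n d1 ∧ HDeriv.tvLt n d2
  | _, _, _, .beta A B M _ => A.tvLt n ∧ B.tvLt n ∧ M.tvLt n
  | _, _, _, .assume φ _ => φ.tvLt n
  | _, _, _, .eqMp φ ψ d1 d2 => φ.tvLt n ∧ ψ.tvLt n ∧ HDeriv.tvLt n d1 ∧ HDeriv.tvLt n d2
  | _, _, _, .deductAntiSym φ ψ d1 d2 =>
      φ.tvLt n ∧ ψ.tvLt n ∧ HDeriv.tvLt n d1 ∧ HDeriv.tvLt n d2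
  | _, _, _, .typeSubst θ d => (∀ A ∈ θ, A.tvLt n) ∧ HDeriv.tvLt (max θ.length n) d
  | _, _, _, .termSubst σ _ _ d => (∀ t ∈ σ, t.tvLt n) ∧ HDeriv.tvLt n d

/-! Parallel reduction `⇒` (Tait–Martin-Löf) for β together with the rule
`term (arrow a b) ⇝ term a → term b`. The rule is left-linear and has no critical pairs, neither
with itself nor with β, so Takahashi's complete development `cd` has the triangle property: `M ⇒ N` implies `N ⇒ cd M`. Hence `⇒` has the diamond property, and since
`→βΣ ⊆ ⇒ ⊆ →βΣ*`, the reflexive-transitive closure of `→βΣ` is confluent. -/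

end HolDk

namespace Relation

variable {α β γ : Type*}

theorem ReflTransGen.lift₂ {r : α → α → Prop} {s : β → β → Prop} {t : γ → γ → Prop}
    (f : α → β → γ) (hl : ∀ a a' b, r a a' → t (f a b) (f a' b))
    (hr : ∀ a b b', s b b' → t (f a b) (f a b')) {a a' : α} {b b' : β}
    (ha : ReflTransGen r a a') (hb : ReflTransGen s b b') :
    ReflTransGen t (f a b) (f a' b') :=
  (ha.lift (f · b) fun _ _ h => hl _ _ b h).trans (hb.lift (f a') fun _ _ h => hr a' _ _ h)

theorem church_rosser_of_diamond_between {r p : α → α → Prop} (hrp : r ≤ p)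
    (hpr : p ≤ ReflTransGen r) (hp : ∀ a b c, p a b → p a c → ∃ d, p b d ∧ p c d)
    {a b c : α} (hab : ReflTransGen r a b) (hac : ReflTransGen r a c) :
    Join (ReflTransGen r) b c := by
  have hp' : ∀ a b c, p a b → p a c → ∃ d, ReflGen p b d ∧ ReflTransGen p c d :=
    fun a b c hab hac => (hp a b c hab hac).imp fun _ h => ⟨.single h.1, .single h.2⟩
  obtain ⟨d, hbd, hcd⟩ := church_rosser hp' (ReflTransGen.mono hrp _ _ hab)
    (ReflTransGen.mono hrp _ _ hac)
  exact ⟨d, reflTransGen_closed hpr _ _ hbd, reflTransGen_closed hpr _ _ hcd⟩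

end Relation

namespace HolDk

open DTm Relation

namespace DTm

theorem shift_shift_of_le (t : DTm) {c c' : ℕ} (d d' : ℕ) (h : c' ≤ c) :
    shift d (c + d') (shift d' c' t) = shift d' c' (shift d c t) := by
  induction t generalizing c c' with
  | var n =>
    simp only [shift]
    split_ifs <;> simp only [shift] <;> split_ifs <;> simp only [var.injEq] <;> omega
  | const | type | kind => rfl
  | pi A B ihA ihB | lam A B ihA ihB =>
    simp only [shift, ihA h, ← ihB (Nat.succ_le_succ h), Nat.add_right_comm c d' 1]
  | app M N ihM ihN => simp only [shift, ihM h, ihN h]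

theorem liftSub_shift (σ : ℕ → DTm) (d c : ℕ) :
    liftSub (fun n => shift d c (σ n)) = fun n => shift d (c + 1) (liftSub σ n) := by
  funext n
  cases n with
  | zero => simp [liftSub, shift]
  | succ n => exact (shift_shift_of_le (σ n) d 1 c.zero_le).symm

theorem liftSub_ite_lt (σ : ℕ → DTm) (d c : ℕ) :
    liftSub (fun n => if n < c then σ n else σ (n + d)) =
      fun n => if n < c + 1 then liftSub σ n else liftSub σ (n + d) := by
  funext n
  cases n with
  | zero => simp [liftSub]
  | succ n =>
    simp only [Nat.add_right_comm n 1 d, liftSub, Nat.add_lt_add_iff_right]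
    split_ifs <;> rfl

theorem shift_subst (t : DTm) (σ : ℕ → DTm) (d c : ℕ) :
    shift d c (subst σ t) = subst (fun n => shift d c (σ n)) t := by
  induction t generalizing σ c with
  | var | const | type | kind => rfl
  | pi A B ihA ihB | lam A B ihA ihB => simp only [subst, shift, ihA, ihB, liftSub_shift]
  | app M N ihM ihN => simp only [subst, shift, ihM, ihN]

theorem subst_shift (t : DTm) (σ : ℕ → DTm) (d c : ℕ) :
    subst σ (shift d c t) = subst (fun n => if n < c then σ n else σ (n + d)) t := by
  induction t generalizing σ c with
  | var n => simp only [shift]; split_ifs with h <;> simp [subst, h]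
  | const | type | kind => rfl
  | pi A B ihA ihB | lam A B ihA ihB => simp only [subst, shift, ihA, ihB, liftSub_ite_lt]
  | app M N ihM ihN => simp only [subst, shift, ihM, ihN]

theorem subst_liftSub_shift (t : DTm) (σ : ℕ → DTm) :
    subst (liftSub σ) (shift 1 0 t) = shift 1 0 (subst σ t) := by
  rw [subst_shift, shift_subst]
  rfl

theorem liftSub_subst (σ τ : ℕ → DTm) :
    liftSub (fun n => subst σ (τ n)) = fun n => subst (liftSub σ) (liftSub τ n) := by
  funext n
  cases n with
  | zero => rfl
  | succ n => exact (subst_liftSub_shift (τ n) σ).symm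

theorem subst_subst (t : DTm) (σ τ : ℕ → DTm) :
    subst σ (subst τ t) = subst (fun n => subst σ (τ n)) t := by
  induction t generalizing σ τ with
  | var | const | type | kind => rfl
  | pi A B ihA ihB | lam A B ihA ihB => simp only [subst, ihA, ihB, liftSub_subst]
  | app M N ihM ihN => simp only [subst, ihM, ihN]

theorem liftSub_var : liftSub var = var := by
  funext n
  cases n <;> rfl

theorem subst_var (t : DTm) : subst var t = t := by
  induction t with
  | var | const | type | kind => rfl
  | pi A B ihA ihB | lam A B ihA ihB => simp only [subst, liftSub_var, ihA, ihB]
  | app M N ihM ihN => simp only [subst, ihM, ihN]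

theorem shift_subst0 (M N : DTm) (d c : ℕ) :
    shift d c (M.subst0 N) = (shift d (c + 1) M).subst0 (shift d c N) := by
  simp only [subst0, shift_subst, subst_shift]
  congr 1
  funext n
  rcases n with _ | n
  · rfl
  · simp only [shift, Nat.add_right_comm n 1 d, Nat.add_lt_add_iff_right]

theorem subst_subst0 (M N : DTm) (σ : ℕ → DTm) :
    subst σ (M.subst0 N) = (subst (liftSub σ) M).subst0 (subst σ N) := by
  simp only [subst0, subst_subst]
  congr 1
  funext n
  rcases n with _ | n
  · rfl
  · simp only [liftSub, subst_shift]
    exact (subst_var (σ n)).symm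

theorem shift_arr (A B : DTm) (d c : ℕ) :
    shift d c (arr A B) = arr (shift d c A) (shift d c B) := by
  simp only [arr, shift, shift_shift_of_le B d 1 c.zero_le]

theorem subst_arr (A B : DTm) (σ : ℕ → DTm) :
    subst σ (arr A B) = arr (subst σ A) (subst σ B) := by
  simp only [arr, subst, subst_liftSub_shift]

end DTm

inductive Par : DTm → DTm → Prop
  | var (n : ℕ) : Par (.var n) (.var n)
  | const (k : ℕ) : Par (.const k) (.const k)
  | type : Par .type .type
  | kind : Par .kind .kind
  | pi {A A' B B' : DTm} : Par A A' → Par B B' → Par (.pi A B) (.pi A' B')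
  | lam {A A' M M' : DTm} : Par A A' → Par M M' → Par (.lam A M) (.lam A' M')
  | app {M M' N N' : DTm} : Par M M' → Par N N' → Par (.app M N) (.app M' N')
  | beta {M M' N N' : DTm} (A : DTm) : Par M M' → Par N N' →
      Par (.app (.lam A M) N) (M'.subst0 N')
  | arrow {a a' b b' : DTm} : Par a a' → Par b b' →
      Par (tTerm (tArr a b)) (arr (tTerm a') (tTerm b'))

namespace Par

@[refl]
theorem refl (M : DTm) : Par M M := by
  induction M with
  | var n => exact .var n
  | const k => exact .const k
  | type => exact .type
  | kind => exact .kind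
  | pi A B ihA ihB => exact .pi ihA ihB
  | lam A M ihA ihM => exact .lam ihA ihM
  | app M N ihM ihN => exact .app ihM ihN

theorem tTerm {a a' : DTm} (h : Par a a') : Par (tTerm a) (tTerm a') :=
  .app (.const 4) h

theorem shift {M M' : DTm} (h : Par M M') (d c : ℕ) : Par (shift d c M) (shift d c M') := by
  induction h generalizing c with
  | var | const => exact refl _
  | type => exact .type
  | kind => exact .kind
  | pi _ _ ihA ihB => exact .pi (ihA c) (ihB (c + 1))
  | lam _ _ ihA ihM => exact .lam (ihA c) (ihM (c + 1))
  | app _ _ ihM ihN => exact .app (ihM c) (ihN c)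
  | beta A _ _ ihM ihN => rw [shift_subst0]; exact .beta _ (ihM (c + 1)) (ihN c)
  | arrow _ _ iha ihb => rw [shift_arr]; exact .arrow (iha c) (ihb c)

theorem liftSub {σ σ' : ℕ → DTm} (h : ∀ n, Par (σ n) (σ' n)) :
    ∀ n, Par (liftSub σ n) (liftSub σ' n)
  | 0 => refl _
  | n + 1 => (h n).shift 1 0

theorem subst {M M' : DTm} (h : Par M M') {σ σ' : ℕ → DTm} (hσ : ∀ n, Par (σ n) (σ' n)) :
    Par (subst σ M) (subst σ' M') := by
  induction h generalizing σ σ' with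
  | var n => exact hσ n
  | const k => exact .const k
  | type => exact .type
  | kind => exact .kind
  | pi _ _ ihA ihB => exact .pi (ihA hσ) (ihB (liftSub hσ))
  | lam _ _ ihA ihM => exact .lam (ihA hσ) (ihM (liftSub hσ))
  | app _ _ ihM ihN => exact .app (ihM hσ) (ihN hσ)
  | beta A _ _ ihM ihN => rw [subst_subst0]; exact .beta _ (ihM (liftSub hσ)) (ihN hσ)
  | arrow _ _ iha ihb => rw [subst_arr]; exact .arrow (iha hσ) (ihb hσ)

theorem subst0 {M M' N N' : DTm} (hM : Par M M') (hN : Par N N') :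
    Par (M.subst0 N) (M'.subst0 N') :=
  hM.subst fun n => match n with
    | 0 => hN
    | _ + 1 => refl _

theorem arr {A A' B B' : DTm} (hA : Par A A') (hB : Par B B') : Par (arr A B) (arr A' B') :=
  .pi hA (hB.shift 1 0)

end Par

def cd : DTm → DTm
  | .pi A B => .pi (cd A) (cd B)
  | .lam A M => .lam (cd A) (cd M)
  | .app (.lam _ M) N => (cd M).subst0 (cd N)
  -- `term (arrow a b)`: `tTerm (tArr a b)` cannot be used as a pattern
  | .app (.const 4) (.app (.app (.const 3) a) b) => arr (tTerm (cd a)) (tTerm (cd b))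
  | .app M N => .app (cd M) (cd N)
  | M => M

theorem Par.triangle {M N : DTm} (h : Par M N) : Par N (cd M) := by
  induction M using cd.induct generalizing N with
  | case1 A B ihA ihB => cases h with | pi hA hB => exact .pi (ihA hA) (ihB hB)
  | case2 A M ihA ihM => cases h with | lam hA hM => exact .lam (ihA hA) (ihM hM)
  | case3 A M N ihM ihN =>
    cases h with
    | app hL hN => cases hL with | lam _ hM => exact .beta _ (ihM hM) (ihN hN)
    | beta _ hM hN => exact (ihM hM).subst0 (ihN hN)
  | case4 a b iha ihb =>
    cases h with
    | app hterm hab =>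
      cases hterm
      cases hab with
      | app harrow hb =>
        cases harrow with
        | app hc ha => cases hc; exact .arrow (iha ha) (ihb hb)
    | arrow ha hb => exact .arr (iha ha).tTerm (ihb hb).tTerm
  | case5 M N not_lam not_arrow ihM ihN =>
    cases h with
    | app hM hN => rw [cd.eq_5 M N not_lam not_arrow]; exact .app (ihM hM) (ihN hN)
    | beta => exact (not_lam _ _ rfl).elim
    | arrow => exact (not_arrow _ _ rfl rfl).elim
  | case6 M not_pi not_lam _ _ not_app =>
    cases h with
    | pi => exact (not_pi _ _ rfl).elim
    | lam => exact (not_lam _ _ rfl).elim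
    | app | beta | arrow => exact (not_app _ _ rfl).elim
    | _ => rfl

section RedCongr

variable {S : Sig} {A A' B B' : DTm}

theorem Red.reflTransGen_app (hA : ReflTransGen (Red S) A A') (hB : ReflTransGen (Red S) B B') :
    ReflTransGen (Red S) (.app A B) (.app A' B') :=
  hA.lift₂ _ (fun _ _ B h => .appL B h) (fun A _ _ h => .appR A h) hB

theorem Red.reflTransGen_lam (hA : ReflTransGen (Red S) A A') (hB : ReflTransGen (Red S) B B') :
    ReflTransGen (Red S) (.lam A B) (.lam A' B') :=
  hA.lift₂ _ (fun _ _ B h => .lamTy B h) (fun A _ _ h => .lamBody A h) hB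

theorem Red.reflTransGen_pi (hA : ReflTransGen (Red S) A A') (hB : ReflTransGen (Red S) B B') :
    ReflTransGen (Red S) (.pi A B) (.pi A' B') :=
  hA.lift₂ _ (fun _ _ B h => .piL B h) (fun A _ _ h => .piR A h) hB

end RedCongr

theorem holSig_hasRule_iff {G : List DTm} {L R : DTm} :
    holSig.hasRule G L R ↔ G = arrowRuleCtx ∧ L = arrowRuleL ∧ R = arrowRuleR := by
  simp [holSig, baseSig, Sig.hasRule]

theorem subst_arrowRuleR (σ : ℕ → DTm) :
    arrowRuleR.subst σ = arr (tTerm (σ 1)) (tTerm (σ 0)) :=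
  subst_arr _ _ σ

theorem red_arrow (a b : DTm) : Red holSig (tTerm (tArr a b)) (arr (tTerm a) (tTerm b)) := by
  have h := Red.rew (fun n => if n = 0 then b else a) (holSig_hasRule_iff.2 ⟨rfl, rfl, rfl⟩)
  rwa [subst_arrowRuleR] at h

theorem Par.of_red {M N : DTm} (h : Red holSig M N) : Par M N := by
  induction h with
  | beta A M N => exact .beta A (.refl M) (.refl N)
  | rew σ hrule =>
    obtain ⟨rfl, rfl, rfl⟩ := holSig_hasRule_iff.1 hrule
    rw [subst_arrowRuleR]
    exact .arrow (.refl _) (.refl _)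
  | appL N _ ih => exact .app ih (.refl N)
  | appR M _ ih => exact .app (.refl M) ih
  | lamTy M _ ih => exact .lam ih (.refl M)
  | lamBody A _ ih => exact .lam (.refl A) ih
  | piL B _ ih => exact .pi ih (.refl B)
  | piR A _ ih => exact .pi (.refl A) ih

theorem Par.reflTransGen_red {M N : DTm} (h : Par M N) : ReflTransGen (Red holSig) M N := by
  induction h with
  | var | const | type | kind => rfl
  | pi _ _ ihA ihB => exact Red.reflTransGen_pi ihA ihB
  | lam _ _ ihA ihM => exact Red.reflTransGen_lam ihA ihM
  | app _ _ ihM ihN => exact Red.reflTransGen_app ihM ihN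
  | beta A _ _ ihM ihN =>
    exact (Red.reflTransGen_app (Red.reflTransGen_lam .refl ihM) ihN).tail (.beta A _ _)
  | @arrow a a' b b' _ _ iha ihb =>
    have harg : ReflTransGen (Red holSig) (tArr a b) (tArr a' b') :=
      Red.reflTransGen_app (Red.reflTransGen_app .refl iha) ihb
    exact (Red.reflTransGen_app .refl harg).tail (red_arrow _ _)

/-- **Lemma 4 (paper §5).** The reduction relation `→βΣ` of the HOL signature
`Σ` is confluent. -/
theorem confluence (M N P : DTm)
    (hMN : Relation.ReflTransGen (Red holSig) M N)
    (hMP : Relation.ReflTransGen (Red holSig) M P) :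
    ∃ Q, Relation.ReflTransGen (Red holSig) N Q ∧
      Relation.ReflTransGen (Red holSig) P Q :=
  church_rosser_of_diamond_between (fun _ _ => Par.of_red) (fun _ _ => Par.reflTransGen_red)
    (fun M _ _ hN hP => ⟨cd M, hN.triangle, hP.triangle⟩) hMN hMP

end HolDk
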